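/- arXiv:2109.13495 — 4 statements merged into one kernel-verified Lean document; each statement's English description precedes it below -/
import Mathlib

section
/- Let A be an n×n matrix with nonnegative real entries such that μ(A) ≤ 1. Then there exists an integer q ≥ 1 such that for every j with 1 ≤ j ≤ q: (i) the sequence of max-times powers A^{⊗(kq+j)} converges entrywise, as k → ∞, to a matrix Ã^{(j)} satisfying A^{⊗q} ⊗ Ã^{(j)} = Ã^{(j)}; and (ii) for every x ∈ ℝ_{≥0}^n, the sequence A^{⊗(kq+j)} ⊗ x converges, as k → ∞, to a vector ξ_x^{(j)} ∈ ℝ_{≥0}^n satisfying A^{⊗q} ⊗ ξ_x^{(j)} = ξ_x^{(j)} (a periodic point of A whose period divides q). -/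
open Filter Topology

/-- Max-times product of two square nonnegative matrices. -/
noncomputable def mProd {m : Type*} [Fintype m] (A B : Matrix m m NNReal) : Matrix m m NNReal :=
  fun i j => Finset.univ.sup fun k => A i k * B k j

/-- Max-times powers: `mPow A 0 = I`, `mPow A (k+1) = A ⊗ mPow A k`. -/
noncomputable def mPow {m : Type*} [Fintype m] [DecidableEq m] (A : Matrix m m NNReal) :
    ℕ → Matrix m m NNReal
  | 0 => 1
  | k + 1 => mProd A (mPow A k)

/-- Max-times action of a matrix on a nonnegative vector. -/
noncomputable def mVec {m : Type*} [Fintype m] (A : Matrix m m NNReal) (x : m → NNReal) :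
    m → NNReal :=
  fun i => Finset.univ.sup fun k => A i k * x k

/-- Maximum circuit geometric mean of a nonnegative matrix. -/
noncomputable def mu {m : Type*} [Fintype m] [DecidableEq m] (A : Matrix m m NNReal) : NNReal :=
  (Finset.Icc 1 (Fintype.card m)).sup fun ℓ =>
    Finset.univ.sup fun i => (mPow A ℓ i i) ^ ((ℓ : ℝ)⁻¹)

/-!
Call a vertex critical if it lies on a circuit of weight at least one; such a circuit can be
taken of length `ℓ ≤ N = card ι`, so `ℓ ∣ q = N!`. An optimal walk either meets a critical vertex
or is a walk of the matrix `A'` obtained by erasing the critical rows and columns. Every circuit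
of `A'` of length `≤ N` has weight `< 1`, and since a walk of length `≥ N` contains a circuit
(pigeonhole), `A'^{⊗m} → 0`. The best weight of a walk of length `m` through a critical vertex
is bounded (all powers are, as `μ(A) ≤ 1`) and does not decrease under `m ↦ m + q` (go `q / ℓ`
more times around the critical circuit). So `A^{⊗(kq+r)}` converges, and `A^{⊗q} ⊗ L = L` for
its limit `L` by continuity of `⊗`.
-/

open Filter Topology Finset

variable {ι : Type*}

section Algebra

variable [Fintype ι]

theorem le_mProd (A B : Matrix ι ι NNReal) (i j k : ι) : A i k * B k j ≤ mProd A B i j :=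
  le_sup (f := fun k => A i k * B k j) (mem_univ k)

theorem mProd_le {A B : Matrix ι ι NNReal} {i j : ι} {c : NNReal}
    (h : ∀ k, A i k * B k j ≤ c) : mProd A B i j ≤ c :=
  Finset.sup_le fun k _ => h k

theorem mProd_assoc (A B C : Matrix ι ι NNReal) :
    mProd (mProd A B) C = mProd A (mProd B C) := by
  funext i j
  simp only [mProd, NNReal.finset_sup_mul, NNReal.mul_finset_sup, mul_assoc]
  exact Finset.sup_comm _ _ _

theorem mVec_mProd (A B : Matrix ι ι NNReal) (x : ι → NNReal) :
    mVec (mProd A B) x = mVec A (mVec B x) := by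
  funext i
  simp only [mVec, mProd, NNReal.finset_sup_mul, NNReal.mul_finset_sup, mul_assoc]
  exact Finset.sup_comm _ _ _

theorem continuous_mProd (A : Matrix ι ι NNReal) : Continuous (mProd A) :=
  continuous_pi fun _ => continuous_pi fun j => Continuous.finset_sup_apply fun k _ =>
    continuous_const.mul ((continuous_apply j).comp (continuous_apply k))

theorem continuous_mVec (x : ι → NNReal) : Continuous fun A : Matrix ι ι NNReal => mVec A x :=
  continuous_pi fun i => Continuous.finset_sup_apply fun k _ =>
    (continuous_apply_apply i k).mul continuous_const

section DecidableEq

variable [DecidableEq ι]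

theorem one_mProd (A : Matrix ι ι NNReal) : mProd 1 A = A := by
  funext i j
  refine le_antisymm (mProd_le fun k => ?_) (by simpa using le_mProd 1 A i j i)
  rcases eq_or_ne i k with rfl | h <;> simp [*]

theorem mProd_one (A : Matrix ι ι NNReal) : mProd A 1 = A := by
  funext i j
  refine le_antisymm (mProd_le fun k => ?_) (by simpa using le_mProd A 1 i j j)
  rcases eq_or_ne k j with rfl | h <;> simp [*]

theorem mPow_one (A : Matrix ι ι NNReal) : mPow A 1 = A :=
  mProd_one A

theorem mPow_add (A : Matrix ι ι NNReal) (s t : ℕ) :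
    mPow A (s + t) = mProd (mPow A s) (mPow A t) := by
  induction s with
  | zero => simp [mPow, one_mProd]
  | succ s ih =>
    rw [Nat.add_right_comm, mPow, mPow, ih, mProd_assoc]

theorem mPow_mul_mPow_le (A : Matrix ι ι NNReal) (s t : ℕ) (i k j : ι) :
    mPow A s i k * mPow A t k j ≤ mPow A (s + t) i j := by
  rw [mPow_add]
  exact le_mProd _ _ _ _ _

theorem mPow_mono {A B : Matrix ι ι NNReal} (h : ∀ i j, A i j ≤ B i j) (m : ℕ) (i j : ι) :
    mPow A m i j ≤ mPow B m i j := by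
  induction m generalizing i j with
  | zero => exact le_rfl
  | succ m ih => exact mProd_le fun k => (mul_le_mul' (h i k) (ih k j)).trans (le_mProd _ _ _ _ _)

theorem mProd_mPow_eq_of_tendsto {A L : Matrix ι ι NNReal} {q r : ℕ}
    (h : Tendsto (fun k => mPow A (k * q + r)) atTop (𝓝 L)) : mProd (mPow A q) L = L := by
  have hshift : Tendsto (fun k => mProd (mPow A q) (mPow A (k * q + r))) atTop (𝓝 L) := by
    refine (h.comp (tendsto_add_atTop_nat 1)).congr fun k => ?_
    simp only [Function.comp_apply, ← mPow_add]
    congr 1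
    ring
  exact tendsto_nhds_unique (((continuous_mProd _).tendsto L).comp h) hshift

end DecidableEq

end Algebra

/-- Walks are sequences `ℕ → ι`; this is the weight of the steps from time `s` to time `e`. -/
def pathWeight (A : Matrix ι ι NNReal) (f : ℕ → ι) (s e : ℕ) : NNReal :=
  ∏ t ∈ Ico s e, A (f t) (f (t + 1))

theorem pathWeight_mul_pathWeight (A : Matrix ι ι NNReal) (f : ℕ → ι) {s t e : ℕ}
    (hst : s ≤ t) (hte : t ≤ e) : pathWeight A f s t * pathWeight A f t e = pathWeight A f s e :=
  prod_Ico_consecutive _ hst hte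

variable [Fintype ι] [DecidableEq ι]

theorem pathWeight_le_mPow (A : Matrix ι ι NNReal) (f : ℕ → ι) {s e : ℕ} (hse : s ≤ e) :
    pathWeight A f s e ≤ mPow A (e - s) (f s) (f e) := by
  obtain ⟨l, rfl⟩ := Nat.exists_eq_add_of_le hse
  rw [Nat.add_sub_cancel_left]
  induction l generalizing s with
  | zero => simp [pathWeight, mPow, Matrix.one_apply]
  | succ l ih =>
    rw [pathWeight, prod_eq_prod_Ico_succ_bot (by omega), ← pathWeight,
      show s + (l + 1) = s + 1 + l by omega]
    exact (mul_le_mul_right (ih (by omega)) _).trans (le_mProd _ _ _ _ _)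

theorem exists_pathWeight_eq_mPow (A : Matrix ι ι NNReal) {m : ℕ} (hm : 1 ≤ m) (i j : ι) :
    ∃ f : ℕ → ι, f 0 = i ∧ f m = j ∧ pathWeight A f 0 m = mPow A m i j := by
  induction m, hm using Nat.le_induction generalizing j with
  | base =>
    exact ⟨fun t => if t = 0 then i else j, by simp, by simp, by simp [pathWeight, mPow_one]⟩
  | succ m _ ih =>
    obtain ⟨k, -, hk⟩ := exists_mem_eq_sup univ ⟨i, mem_univ i⟩ fun k => mPow A m i k * A k j
    obtain ⟨g, hg0, hgm, hg⟩ := ih k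
    refine ⟨Function.update g (m + 1) j, by simp [hg0], by simp, ?_⟩
    have hprefix : pathWeight A (Function.update g (m + 1) j) 0 m = pathWeight A g 0 m :=
      prod_congr rfl fun t ht => by
        rw [mem_Ico] at ht
        rw [Function.update_of_ne (by omega), Function.update_of_ne (by omega)]
    rw [← pathWeight_mul_pathWeight A _ (Nat.zero_le m) m.le_succ, hprefix, hg, mPow_add,
      mPow_one]
    simp [pathWeight, mProd, hk, hgm]

theorem mPow_apply_self_le_mu_pow (A : Matrix ι ι NNReal) {ℓ : ℕ}
    (hℓ : ℓ ∈ Icc 1 (Fintype.card ι)) (v : ι) : mPow A ℓ v v ≤ mu A ^ ℓ := by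
  have hpos : (0 : ℝ) < ℓ := by simp only [mem_Icc] at hℓ; exact_mod_cast hℓ.1
  have h : mPow A ℓ v v ^ (ℓ : ℝ)⁻¹ ≤ mu A :=
    le_sup_of_le (f := fun ℓ => univ.sup fun i => mPow A ℓ i i ^ (ℓ : ℝ)⁻¹) hℓ
      (le_sup (f := fun i => mPow A ℓ i i ^ (ℓ : ℝ)⁻¹) (mem_univ v))
  rwa [NNReal.rpow_inv_le_iff hpos, NNReal.rpow_natCast] at h

/-- Pigeonhole: an optimal walk of length at least `card ι` revisits a vertex, and cutting out
the circuit between the two visits costs a factor at most `μ(A) ^ ℓ`. -/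
theorem exists_mPow_le_mu_pow_mul (A : Matrix ι ι NNReal) {m : ℕ} (hm : Fintype.card ι ≤ m)
    (i j : ι) : ∃ ℓ ∈ Icc 1 (Fintype.card ι), mPow A m i j ≤ mu A ^ ℓ * mPow A (m - ℓ) i j := by
  have hn : 0 < Fintype.card ι := Fintype.card_pos_iff.2 ⟨i⟩
  obtain ⟨f, rfl, rfl, hf⟩ := exists_pathWeight_eq_mPow A (hn.trans_le hm) i j
  obtain ⟨a, b, hab, hb, hfab⟩ : ∃ a b, a < b ∧ b ≤ Fintype.card ι ∧ f a = f b := by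
    obtain ⟨x, hx, y, hy, hxy, hfxy⟩ := exists_ne_map_eq_of_card_lt_of_maps_to
      (s := range (Fintype.card ι + 1)) (t := univ) (f := f) (by simp)
      (fun _ _ => mem_coe.2 (mem_univ _))
    rw [mem_range] at hx hy
    rcases hxy.lt_or_gt with h | h
    · exact ⟨x, y, h, by omega, hfxy⟩
    · exact ⟨y, x, h, by omega, hfxy.symm⟩
  refine ⟨b - a, mem_Icc.2 ⟨by omega, by omega⟩, ?_⟩
  calc mPow A m (f 0) (f m)
      = pathWeight A f 0 a * pathWeight A f a b * pathWeight A f b m := by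
        rw [pathWeight_mul_pathWeight A f (Nat.zero_le a) hab.le,
          pathWeight_mul_pathWeight A f (Nat.zero_le b) (by omega), hf]
    _ ≤ mPow A a (f 0) (f a) * mPow A (b - a) (f a) (f b) * mPow A (m - b) (f b) (f m) := by
        gcongr
        · simpa using pathWeight_le_mPow A f (Nat.zero_le a)
        · exact pathWeight_le_mPow A f hab.le
        · exact pathWeight_le_mPow A f (by omega)
    _ ≤ mPow A a (f 0) (f a) * mu A ^ (b - a) * mPow A (m - b) (f a) (f m) := by
        rw [← hfab]
        gcongr
        exact mPow_apply_self_le_mu_pow A (mem_Icc.2 ⟨by omega, by omega⟩) _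
    _ = mu A ^ (b - a) * (mPow A a (f 0) (f a) * mPow A (m - b) (f a) (f m)) := by ring
    _ ≤ mu A ^ (b - a) * mPow A (m - (b - a)) (f 0) (f m) := by
        gcongr
        exact (mPow_mul_mPow_le A a (m - b) _ _ _).trans_eq (by congr 1; omega)

theorem mPow_le_mu_pow_div_mul {A : Matrix ι ι NNReal} (hA : mu A ≤ 1) (i j : ι) (m : ℕ) :
    mPow A m i j ≤
      mu A ^ (m / Fintype.card ι) * (range (Fintype.card ι)).sup fun m' => mPow A m' i j := by
  set n := Fintype.card ι
  induction m using Nat.strong_induction_on with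
  | _ m ih =>
    by_cases hm : m < n
    · rw [Nat.div_eq_of_lt hm, pow_zero, one_mul]
      exact le_sup (f := fun m' => mPow A m' i j) (mem_range.2 hm)
    obtain ⟨ℓ, hℓ, hle⟩ := exists_mPow_le_mu_pow_mul A (not_lt.1 hm) i j
    rw [mem_Icc] at hℓ
    have hdiv : m / n ≤ ℓ + (m - ℓ) / n := by
      rw [Nat.div_eq_sub_div (by omega) (not_lt.1 hm)]
      have : (m - n) / n ≤ (m - ℓ) / n := Nat.div_le_div_right (by omega)
      omega
    calc mPow A m i j ≤ mu A ^ ℓ * mPow A (m - ℓ) i j := hle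
      _ ≤ mu A ^ ℓ * (mu A ^ ((m - ℓ) / n) * _) := by gcongr; exact ih _ (by omega)
      _ = mu A ^ (ℓ + (m - ℓ) / n) * _ := by rw [pow_add, mul_assoc]
      _ ≤ _ := mul_le_mul_left (pow_le_pow_right_of_le_one' hA hdiv) _

theorem mPow_apply_le_of_mu_le_one {A : Matrix ι ι NNReal} (hA : mu A ≤ 1) (i j : ι) (m : ℕ) :
    mPow A m i j ≤ (range (Fintype.card ι)).sup fun m' => mPow A m' i j :=
  (mPow_le_mu_pow_div_mul hA i j m).trans
    (mul_le_of_le_one_left zero_le (pow_le_one' hA _))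

theorem tendsto_mPow_apply_zero_of_mu_lt_one {A : Matrix ι ι NNReal} (hA : mu A < 1) (i j : ι) :
    Tendsto (fun m => mPow A m i j) atTop (𝓝 0) := by
  have hn : Fintype.card ι ≠ 0 := (Fintype.card_pos_iff.2 ⟨i⟩).ne'
  have hbound : Tendsto (fun m => mu A ^ (m / Fintype.card ι) *
      (range (Fintype.card ι)).sup fun m' => mPow A m' i j) atTop (𝓝 0) := by
    simpa using ((NNReal.tendsto_pow_atTop_nhds_zero_of_lt_one hA).comp
      (Nat.tendsto_div_const_atTop hn)).mul_const _
  exact tendsto_of_tendsto_of_tendsto_of_le_of_le tendsto_const_nhds hbound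
    (fun _ => zero_le) (mPow_le_mu_pow_div_mul hA.le i j)

/-- When `μ(A) ≤ 1`, the critical vertices are those on a circuit of geometric mean `1`. -/
def IsCritical (A : Matrix ι ι NNReal) (v : ι) : Prop :=
  ∃ ℓ ∈ Icc 1 (Fintype.card ι), 1 ≤ mPow A ℓ v v

theorem mPow_apply_self_pow_le (A : Matrix ι ι NNReal) (ℓ t : ℕ) (v : ι) :
    mPow A ℓ v v ^ t ≤ mPow A (ℓ * t) v v := by
  induction t with
  | zero => simp [mPow]
  | succ t ih =>
    rw [pow_succ, Nat.mul_succ]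
    exact (mul_le_mul_left ih _).trans (mPow_mul_mPow_le A _ _ v v v)

theorem IsCritical.one_le_mPow_factorial {A : Matrix ι ι NNReal} {v : ι} (hv : IsCritical A v) :
    1 ≤ mPow A (Fintype.card ι).factorial v v := by
  obtain ⟨ℓ, hℓ, hone⟩ := hv
  rw [mem_Icc] at hℓ
  obtain ⟨t, ht⟩ := Nat.dvd_factorial hℓ.1 hℓ.2
  rw [ht]
  exact (one_le_pow₀ hone).trans (mPow_apply_self_pow_le A ℓ t v)

open Classical in
noncomputable def offCritical (A : Matrix ι ι NNReal) : Matrix ι ι NNReal :=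
  fun i j => if IsCritical A i ∨ IsCritical A j then 0 else A i j

theorem offCritical_le (A : Matrix ι ι NNReal) (i j : ι) : offCritical A i j ≤ A i j := by
  unfold offCritical
  split_ifs <;> simp

theorem mPow_offCritical_eq_zero {A : Matrix ι ι NNReal} {v : ι} (hv : IsCritical A v) {m : ℕ}
    (hm : 1 ≤ m) (w : ι) : mPow (offCritical A) m v w = 0 := by
  obtain ⟨m, rfl⟩ := Nat.exists_eq_add_of_le' hm
  refine le_antisymm (mProd_le fun k => ?_) zero_le
  simp [offCritical, hv]

theorem mu_offCritical_lt_one (A : Matrix ι ι NNReal) : mu (offCritical A) < 1 := by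
  simp only [mu, Finset.sup_lt_iff (zero_lt_one' NNReal)]
  intro ℓ hℓ v _
  have hpos : (0 : ℝ) < (ℓ : ℝ)⁻¹ := by
    simp only [mem_Icc] at hℓ
    exact inv_pos.2 (by exact_mod_cast hℓ.1)
  refine NNReal.rpow_lt_one ?_ hpos
  by_cases hv : IsCritical A v
  · rw [mPow_offCritical_eq_zero hv (mem_Icc.1 hℓ).1]
    exact zero_lt_one
  · exact (mPow_mono (offCritical_le A) ℓ v v).trans_lt (not_le.1 fun h => hv ⟨ℓ, hℓ, h⟩)

open Classical in
/-- The largest weight of a walk of length `m` from `i` to `j` through a critical vertex. -/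
noncomputable def critWeight (A : Matrix ι ι NNReal) (m : ℕ) (i j : ι) : NNReal :=
  (range (m + 1) ×ˢ univ.filter (IsCritical A)).sup fun p =>
    mPow A p.1 i p.2 * mPow A (m - p.1) p.2 j

theorem critWeight_le_iff {A : Matrix ι ι NNReal} {m : ℕ} {i j : ι} {c : NNReal} :
    critWeight A m i j ≤ c ↔
      ∀ a v, a ≤ m → IsCritical A v → mPow A a i v * mPow A (m - a) v j ≤ c := by
  simp [critWeight]

theorem le_critWeight {A : Matrix ι ι NNReal} {v : ι} (hv : IsCritical A v) {a m : ℕ}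
    (ha : a ≤ m) (i j : ι) : mPow A a i v * mPow A (m - a) v j ≤ critWeight A m i j :=
  critWeight_le_iff.1 le_rfl a v ha hv

theorem critWeight_le_mPow (A : Matrix ι ι NNReal) (m : ℕ) (i j : ι) :
    critWeight A m i j ≤ mPow A m i j :=
  critWeight_le_iff.2 fun a v ha _ =>
    (mPow_mul_mPow_le A a (m - a) i v j).trans_eq (by rw [Nat.add_sub_cancel' ha])

theorem critWeight_le_add_factorial (A : Matrix ι ι NNReal) (m : ℕ) (i j : ι) :
    critWeight A m i j ≤ critWeight A (m + (Fintype.card ι).factorial) i j := by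
  refine critWeight_le_iff.2 fun a v ha hv => ?_
  calc mPow A a i v * mPow A (m - a) v j
      ≤ mPow A a i v * (mPow A (Fintype.card ι).factorial v v * mPow A (m - a) v j) := by
        gcongr
        exact le_mul_of_one_le_left zero_le hv.one_le_mPow_factorial
    _ ≤ mPow A a i v * mPow A (m + (Fintype.card ι).factorial - a) v j := by
        gcongr
        exact (mPow_mul_mPow_le A _ _ v v j).trans_eq (by congr 1; omega)
    _ ≤ _ := le_critWeight hv (by omega) i j

theorem mPow_le_max_critWeight (A : Matrix ι ι NNReal) (m : ℕ) (i j : ι) :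
    mPow A m i j ≤ max (critWeight A m i j) (mPow (offCritical A) m i j) := by
  rcases Nat.eq_zero_or_pos m with rfl | hm
  · exact le_max_of_le_right le_rfl
  obtain ⟨f, rfl, rfl, hf⟩ := exists_pathWeight_eq_mPow A hm i j
  rw [← hf]
  by_cases hcrit : ∃ t ≤ m, IsCritical A (f t)
  · obtain ⟨t, htm, ht⟩ := hcrit
    refine le_max_of_le_left ?_
    rw [← pathWeight_mul_pathWeight A f (Nat.zero_le t) htm]
    calc pathWeight A f 0 t * pathWeight A f t m
        ≤ mPow A t (f 0) (f t) * mPow A (m - t) (f t) (f m) := by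
          gcongr
          · simpa using pathWeight_le_mPow A f (Nat.zero_le t)
          · exact pathWeight_le_mPow A f htm
      _ ≤ _ := le_critWeight ht htm _ _
  · push Not at hcrit
    refine le_max_of_le_right (le_of_eq_of_le ?_ ((pathWeight_le_mPow _ f (Nat.zero_le m)).trans_eq
      (by rw [Nat.sub_zero])))
    refine prod_congr rfl fun t ht => ?_
    rw [mem_Ico] at ht
    simp [offCritical, hcrit t (by omega), hcrit (t + 1) (by omega)]

theorem exists_tendsto_mPow_apply {A : Matrix ι ι NNReal} (hA : mu A ≤ 1) (r : ℕ) (i j : ι) :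
    ∃ L, Tendsto (fun k => mPow A (k * (Fintype.card ι).factorial + r) i j) atTop (𝓝 L) := by
  set q := (Fintype.card ι).factorial
  have hidx : Tendsto (fun k => k * q + r) atTop atTop :=
    tendsto_atTop_mono (fun k => Nat.le_add_right_of_le (Nat.le_mul_of_pos_right k
      (Nat.factorial_pos _))) tendsto_id
  have hmono : Monotone fun k => critWeight A (k * q + r) i j :=
    monotone_nat_of_le_succ fun k => (critWeight_le_add_factorial A _ i j).trans_eq
      (by rw [show k * q + r + q = (k + 1) * q + r by ring])
  have hbdd : BddAbove (Set.range fun k => critWeight A (k * q + r) i j) :=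
    ⟨_, Set.forall_mem_range.2 fun k =>
      (critWeight_le_mPow A _ i j).trans (mPow_apply_le_of_mu_le_one hA i j _)⟩
  have hcrit := tendsto_atTop_ciSup hmono hbdd
  have hoff := (tendsto_mPow_apply_zero_of_mu_lt_one (mu_offCritical_lt_one A) i j).comp hidx
  exact ⟨_, tendsto_of_tendsto_of_tendsto_of_le_of_le hcrit (by simpa using hcrit.max hoff)
    (fun _ => critWeight_le_mPow A _ i j) (fun _ => mPow_le_max_critWeight A _ i j)⟩

theorem exists_tendsto_mPow {A : Matrix ι ι NNReal} (hA : mu A ≤ 1) (r : ℕ) :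
    ∃ L : Matrix ι ι NNReal,
      Tendsto (fun k => mPow A (k * (Fintype.card ι).factorial + r)) atTop (𝓝 L) := by
  choose L hL using exists_tendsto_mPow_apply hA r
  exact ⟨L, tendsto_pi_nhds.2 fun i => tendsto_pi_nhds.2 (hL i)⟩

theorem stmt_0 (n : ℕ) (A : Matrix (Fin n) (Fin n) NNReal) (hA : mu A ≤ 1) :
    ∃ q : ℕ, 1 ≤ q ∧ ∀ j : ℕ, 1 ≤ j → j ≤ q →
      (∃ Atil : Matrix (Fin n) (Fin n) NNReal,
        Tendsto (fun k => mPow A (k * q + j)) atTop (nhds Atil) ∧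
          mProd (mPow A q) Atil = Atil) ∧
      (∀ x : Fin n → NNReal, ∃ ξ : Fin n → NNReal,
        Tendsto (fun k => mVec (mPow A (k * q + j)) x) atTop (nhds ξ) ∧
          mVec (mPow A q) ξ = ξ) := by
  refine ⟨(Fintype.card (Fin n)).factorial, Nat.factorial_pos _, fun r _ _ => ?_⟩
  obtain ⟨L, hL⟩ := exists_tendsto_mPow hA r
  have hfix := mProd_mPow_eq_of_tendsto hL
  refine ⟨⟨L, hL, hfix⟩, fun x => ⟨mVec L x, ((continuous_mVec x).tendsto L).comp hL, ?_⟩⟩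
  rw [← mVec_mProd, hfix]
end

section
/- Let A_1, …, A_N be n×n matrices with nonnegative real entries, each with spectral radius at most 1. Suppose there is a nonempty set E = {v_1, …, v_m} of nonzero vectors in ℝ^n such that each v_t is an eigenvector of every A_i, i.e., for each i and t there is a real λ_{i,t} with A_i v_t = λ_{i,t} v_t. Then there exists an integer q ≥ 1 such that for every p ≥ 1, every word ω ∈ {1,…,N}^p containing every letter 1, …, N at least once, and every x in the real linear span of E, the limit lim_{k→∞} A_ω^{kq} x = ξ_x exists, is independent of the word ω, and satisfies A_ω^q ξ_x = ξ_x, where A_ω = A_{ω_p} A_{ω_{p−1}} ⋯ A_{ω_1}. -/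
/-!
A common eigenvector `v_t` is an eigenvector of every word product, with eigenvalue
`μ_t = ∏ λ_{ω_j,t}`, and `|λ_{i,t}| ≤ 1` because `λ_{i,t}` is a root of the characteristic
polynomial of `A_i`. Hence `(μ_t ^ 2) ^ k` tends to `1` if every `λ_{i,t}` is `±1` and to `0`
otherwise; since `ω` contains every letter, which case occurs does not depend on `ω`. Taking
`q = 2` removes the signs, and the limit of `(A_ω ^ q) ^ k x` is a fixed point of `A_ω ^ q` by
continuity.
-/

open Filter Topology

/-- The matrix product `A_{ω_p} ⋯ A_{ω_1}` associated to a word `ω`. -/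
def wordProdR {n N : ℕ} (A : Fin N → Matrix (Fin n) (Fin n) ℝ) :
    ∀ {p : ℕ}, (Fin p → Fin N) → Matrix (Fin n) (Fin n) ℝ
  | 0, _ => 1
  | p + 1, ω => A (ω (Fin.last p)) * wordProdR A fun i : Fin p => ω i.castSucc

open Matrix

theorem Matrix.isRoot_charpoly_of_mulVec_eq_smul {ι K : Type*} [Fintype ι] [DecidableEq ι]
    [Field K] {M : Matrix ι ι K} {w : ι → K} (hw : w ≠ 0) {μ : K}
    (h : M *ᵥ w = μ • w) :
    M.charpoly.IsRoot μ := by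
  rw [← charpoly_toLin', ← Module.End.hasEigenvalue_iff_isRoot_charpoly]
  exact Module.End.hasEigenvalue_of_hasEigenvector ⟨Module.End.mem_eigenspace_iff.mpr h, hw⟩

theorem abs_le_one_of_mulVec_eq_smul {ι : Type*} [Fintype ι] [DecidableEq ι]
    {M : Matrix ι ι ℝ}
    (hρ : ∀ z : ℂ, (M.map (fun r : ℝ => (r : ℂ))).charpoly.IsRoot z → ‖z‖ ≤ 1)
    {w : ι → ℝ} (hw : w ≠ 0) {μ : ℝ} (h : M *ᵥ w = μ • w) : |μ| ≤ 1 := by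
  have hroot : (M.map Complex.ofRealHom).charpoly.IsRoot (μ : ℂ) := by
    rw [charpoly_map]
    exact (isRoot_charpoly_of_mulVec_eq_smul hw h).map
  simpa using hρ μ hroot

theorem Matrix.pow_mulVec_eq_smul {ι R : Type*} [Fintype ι] [DecidableEq ι] [CommSemiring R]
    {M : Matrix ι ι R} {w : ι → R} {μ : R} (h : M *ᵥ w = μ • w) (k : ℕ) :
    (M ^ k) *ᵥ w = μ ^ k • w := by
  induction k with
  | zero => simp
  | succ k ih => rw [pow_succ', ← mulVec_mulVec, ih, mulVec_smul, h, smul_smul, pow_succ]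

theorem Matrix.mulVec_eq_of_tendsto_pow_mulVec {ι R : Type*} [Fintype ι] [DecidableEq ι]
    [Semiring R] [TopologicalSpace R] [IsTopologicalSemiring R] [T2Space R]
    {M : Matrix ι ι R} {x ξ : ι → R} (h : Tendsto (fun k => (M ^ k) *ᵥ x) atTop (𝓝 ξ)) :
    M *ᵥ ξ = ξ := by
  have hM : Tendsto (fun k => M *ᵥ ((M ^ k) *ᵥ x)) atTop (𝓝 (M *ᵥ ξ)) :=
    ((continuous_const.matrix_mulVec continuous_id).tendsto ξ).comp h
  refine tendsto_nhds_unique hM ?_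
  simpa only [Function.comp_def, mulVec_mulVec, ← pow_succ'] using
    h.comp (tendsto_add_atTop_nat 1)

theorem tendsto_prod_pow_ite {ι : Type*} [Fintype ι] {b : ι → ℝ} (hb0 : ∀ j, 0 ≤ b j)
    (hb1 : ∀ j, b j ≤ 1) :
    Tendsto (fun k => (∏ j, b j) ^ k) atTop (𝓝 (if ∀ j, b j = 1 then 1 else 0)) := by
  split_ifs with h
  · simp [h]
  · push Not at h
    obtain ⟨j, hj⟩ := h
    refine tendsto_pow_atTop_nhds_zero_of_lt_one (Finset.prod_nonneg fun j _ => hb0 j) ?_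
    calc ∏ j, b j ≤ ∏ i ∈ {j}, b i :=
          Finset.prod_le_prod_of_subset_of_le_one (by simp) (fun i _ => hb0 i) (fun i _ _ => hb1 i)
      _ < 1 := by simpa using lt_of_le_of_ne (hb1 j) hj

theorem wordProdR_mulVec_eq_smul {n N : ℕ} {A : Fin N → Matrix (Fin n) (Fin n) ℝ}
    {w : Fin n → ℝ} {lam : Fin N → ℝ} (h : ∀ i, A i *ᵥ w = lam i • w) :
    ∀ {p : ℕ} (ω : Fin p → Fin N), wordProdR A ω *ᵥ w = (∏ j, lam (ω j)) • w
  | 0, _ => by simp [wordProdR]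
  | p + 1, ω => by
    rw [wordProdR, ← mulVec_mulVec, wordProdR_mulVec_eq_smul h, mulVec_smul, h,
      Fin.prod_univ_castSucc, smul_smul, mul_comm]

theorem stmt_5_general (n N m : ℕ) (A : Fin N → Matrix (Fin n) (Fin n) ℝ)
    (hρ : ∀ i, ∀ z : ℂ, (Matrix.charpoly ((A i).map (fun r : ℝ => (r : ℂ)))).IsRoot z →
      ‖z‖ ≤ 1)
    (v : Fin m → (Fin n → ℝ)) (hv0 : ∀ t, v t ≠ 0)
    (heig : ∀ i t, ∃ lam : ℝ, (A i).mulVec (v t) = lam • v t) :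
    ∃ q : ℕ, 1 ≤ q ∧
      ∀ x ∈ Submodule.span ℝ (Set.range v), ∃ ξ : Fin n → ℝ,
        ∀ p : ℕ, 1 ≤ p → ∀ ω : Fin p → Fin N, (∀ i : Fin N, ∃ t, ω t = i) →
          Tendsto (fun k => ((wordProdR A ω) ^ (k * q)).mulVec x) atTop (nhds ξ) ∧
            ((wordProdR A ω) ^ q).mulVec ξ = ξ := by
  choose lam hlam using heig
  have hsq_le : ∀ i t, lam i t ^ 2 ≤ 1 := fun i t =>
    sq_le_one_iff_abs_le_one _ |>.mpr (abs_le_one_of_mulVec_eq_smul (hρ i) (hv0 t) (hlam i t))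
  refine ⟨2, one_le_two, fun x hx => ?_⟩
  obtain ⟨c, rfl⟩ := (Submodule.mem_span_range_iff_exists_fun ℝ).mp hx
  refine ⟨∑ t, c t • (if ∀ i, lam i t ^ 2 = 1 then (1 : ℝ) else 0) • v t,
    fun p _ ω hω => ?_⟩
  have hW : ∀ t, (wordProdR A ω ^ 2) *ᵥ v t = (∏ j, lam (ω j) t ^ 2) • v t := fun t => by
    rw [Finset.prod_pow]
    exact pow_mulVec_eq_smul (wordProdR_mulVec_eq_smul (fun i => hlam i t) ω) 2
  have hconv : Tendsto (fun k => ((wordProdR A ω ^ 2) ^ k) *ᵥ ∑ t, c t • v t) atTop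
      (𝓝 (∑ t, c t • (if ∀ i, lam i t ^ 2 = 1 then (1 : ℝ) else 0) • v t)) := by
    simp only [mulVec_sum, mulVec_smul, pow_mulVec_eq_smul (hW _)]
    refine tendsto_finsetSum _ fun t _ => (Tendsto.smul_const ?_ (v t)).const_smul (c t)
    convert tendsto_prod_pow_ite (b := fun j => lam (ω j) t ^ 2) (fun j => sq_nonneg _)
      (fun j => hsq_le _ t) using 3
    exact (show Function.Surjective ω from hω).forall
  simp only [pow_mul']
  exact ⟨hconv, mulVec_eq_of_tendsto_pow_mulVec hconv⟩

theorem stmt_5 (n N m : ℕ) (A : Fin N → Matrix (Fin n) (Fin n) ℝ)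
    (hpos : ∀ i, ∀ a b, 0 ≤ A i a b)
    (hρ : ∀ i, ∀ z : ℂ, (Matrix.charpoly ((A i).map (fun r : ℝ => (r : ℂ)))).IsRoot z →
      ‖z‖ ≤ 1)
    (hm : 1 ≤ m) (v : Fin m → (Fin n → ℝ)) (hv0 : ∀ t, v t ≠ 0)
    (heig : ∀ i t, ∃ lam : ℝ, (A i).mulVec (v t) = lam • v t) :
    ∃ q : ℕ, 1 ≤ q ∧
      ∀ x ∈ Submodule.span ℝ (Set.range v), ∃ ξ : Fin n → ℝ,
        ∀ p : ℕ, 1 ≤ p → ∀ ω : Fin p → Fin N, (∀ i : Fin N, ∃ t, ω t = i) →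
          Tendsto (fun k => ((wordProdR A ω) ^ (k * q)).mulVec x) atTop (nhds ξ) ∧
            ((wordProdR A ω) ^ q).mulVec ξ = ξ :=
  stmt_5_general n N m A hρ v hv0 heig
end

section
/- Let A be an n×n nonnegative irreducible matrix with μ(A) ≤ 1, let x ∈ ℝ_{≥0}^n be a nonzero vector, and set z = A* ⊗ x, where A* = I ⊕ A ⊕ A^{⊗2} ⊕ ⋯ ⊕ A^{⊗(n−1)} (entrywise maximum of max-times powers). Then every entry of z is strictly positive, and for all indices i, j one has z_i^{−1}·A_{ij}·z_j ≤ 1 (i.e., with D = diag(z_1,…,z_n), every entry of D^{−1} A D is at most 1). -/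
open Filter Topology

/-- A nonnegative matrix is irreducible if its weighted digraph is strongly connected. -/
def MaxIrreducible {m : Type*} [Fintype m] [DecidableEq m] (A : Matrix m m NNReal) : Prop :=
  ∀ i j, ∃ k : ℕ, 1 ≤ k ∧ 0 < mPow A k i j

/-! Every max-times power of `A` is bounded by the Kleene star `A*`: an optimal walk of length
at least `n` revisits a vertex, and cutting out the circuit in between (of weight at most
`μ(A)^c ≤ 1`) gives a shorter walk of at least the same weight. Hence `A ⊗ A* ≤ A*`, so
`z = A* ⊗ x` satisfies `A ⊗ z ≤ z`; irreducibility makes `A*` entrywise positive, so `z > 0`. -/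

section MaxTimes

variable {m : Type*} [Fintype m] [DecidableEq m] (A : Matrix m m NNReal)

noncomputable def mStar : Matrix m m NNReal :=
  fun i j => (Finset.range (Fintype.card m)).sup fun ℓ => mPow A ℓ i j

theorem mPow_succ_apply (k : ℕ) (i j : m) :
    mPow A (k + 1) i j = Finset.univ.sup fun l => A i l * mPow A k l j :=
  rfl

theorem mul_mPow_le_mPow_succ (k : ℕ) (i l j : m) :
    A i l * mPow A k l j ≤ mPow A (k + 1) i j :=
  Finset.le_sup (f := fun l => A i l * mPow A k l j) (Finset.mem_univ l)

theorem mPow_mul_mPow_le_mPow_add (p q : ℕ) (i l j : m) :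
    mPow A p i l * mPow A q l j ≤ mPow A (p + q) i j := by
  induction p generalizing i with
  | zero =>
    rcases eq_or_ne i l with rfl | h
    · simp [mPow]
    · simp [mPow, Matrix.one_apply_ne h]
  | succ p ih =>
    rw [mPow_succ_apply, NNReal.finset_sup_mul, Finset.sup_le_iff]
    intro r _
    rw [mul_assoc, Nat.add_right_comm]
    exact (mul_le_mul_right (ih r) _).trans (mul_mPow_le_mPow_succ A _ i r j)

theorem prod_walk_le_mPow (k : ℕ) (v : ℕ → m) :
    ∏ t ∈ Finset.range k, A (v t) (v (t + 1)) ≤ mPow A k (v 0) (v k) := by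
  induction k generalizing v with
  | zero => simp [mPow]
  | succ k ih =>
    rw [Finset.prod_range_succ', mul_comm]
    exact (mul_le_mul_right (ih fun t => v (t + 1)) _).trans
      (mul_mPow_le_mPow_succ A k (v 0) (v 1) (v (k + 1)))

theorem prod_Ico_walk_le_mPow {a b : ℕ} (hab : a ≤ b) (v : ℕ → m) :
    ∏ t ∈ Finset.Ico a b, A (v t) (v (t + 1)) ≤ mPow A (b - a) (v a) (v b) := by
  rw [Finset.prod_Ico_eq_prod_range]
  simpa [add_assoc, Nat.add_sub_cancel' hab] using
    prod_walk_le_mPow A (b - a) fun t => v (a + t)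

theorem exists_walk_mPow_le_prod (k : ℕ) (i j : m) :
    ∃ v : ℕ → m, v 0 = i ∧ v (k + 1) = j ∧
      mPow A (k + 1) i j ≤ ∏ t ∈ Finset.range (k + 1), A (v t) (v (t + 1)) := by
  induction k generalizing i with
  | zero =>
    refine ⟨fun t => if t = 0 then i else j, rfl, rfl, ?_⟩
    rw [mPow_succ_apply, Finset.sup_le_iff]
    intro l _
    rcases eq_or_ne l j with rfl | h
    · simp [mPow]
    · simp [mPow, Matrix.one_apply_ne h]
  | succ k ih =>
    obtain ⟨l, -, hl⟩ := Finset.exists_mem_eq_sup Finset.univ ⟨i, Finset.mem_univ i⟩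
      fun l => A i l * mPow A (k + 1) l j
    obtain ⟨w, hw0, hwk, hw⟩ := ih l
    refine ⟨fun t => if t = 0 then i else w (t - 1), rfl, by simpa using hwk, ?_⟩
    rw [Finset.prod_range_succ', mPow_succ_apply, hl]
    refine (mul_le_mul_right hw (A i l)).trans_eq ?_
    simp [hw0, mul_comm]

theorem mPow_apply_self_le_one (hmu : mu A ≤ 1) {c : ℕ} (hc : 1 ≤ c)
    (hcm : c ≤ Fintype.card m) (i : m) : mPow A c i i ≤ 1 := by
  have hroot : mPow A c i i ^ ((c : ℝ)⁻¹) ≤ 1 :=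
    le_trans (Finset.le_sup (f := fun i => mPow A c i i ^ ((c : ℝ)⁻¹)) (Finset.mem_univ i))
      (le_trans (Finset.le_sup (f := fun ℓ => Finset.univ.sup fun i =>
        mPow A ℓ i i ^ ((ℓ : ℝ)⁻¹)) (Finset.mem_Icc.2 ⟨hc, hcm⟩)) hmu)
  rwa [NNReal.rpow_inv_le_iff (by exact_mod_cast hc), NNReal.one_rpow] at hroot

omit [DecidableEq m] in
theorem exists_lt_le_card_apply_eq (v : ℕ → m) :
    ∃ t₁ t₂, t₁ < t₂ ∧ t₂ ≤ Fintype.card m ∧ v t₁ = v t₂ := by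
  obtain ⟨a, b, hab, h⟩ := Fintype.exists_ne_map_eq_of_card_lt
    (fun t : Fin (Fintype.card m + 1) => v t) (by simp)
  rcases lt_or_gt_of_ne (Fin.val_ne_of_ne hab) with hlt | hlt
  · exact ⟨a, b, hlt, Nat.lt_succ_iff.1 b.isLt, h⟩
  · exact ⟨b, a, hlt, Nat.lt_succ_iff.1 a.isLt, h.symm⟩

theorem exists_lt_mPow_le_of_card_le (hmu : mu A ≤ 1) {k : ℕ} (hk : Fintype.card m ≤ k)
    (i j : m) : ∃ k' < k, mPow A k i j ≤ mPow A k' i j := by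
  obtain ⟨k, rfl⟩ : ∃ k', k = k' + 1 :=
    Nat.exists_eq_add_one.2 (Fintype.card_pos_iff.2 ⟨i⟩ |>.trans_le hk)
  obtain ⟨v, hv0, hvk, hv⟩ := exists_walk_mPow_le_prod A k i j
  obtain ⟨t₁, t₂, ht, ht₂, hvt⟩ := exists_lt_le_card_apply_eq v
  set f := fun t => A (v t) (v (t + 1))
  have hhead := prod_Ico_walk_le_mPow A (Nat.zero_le t₁) v
  have hcycle := prod_Ico_walk_le_mPow A ht.le v
  rw [← hvt] at hcycle
  replace hcycle := hcycle.trans (mPow_apply_self_le_one A hmu (by omega) (by omega) (v t₁))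
  have htail := prod_Ico_walk_le_mPow A (ht₂.trans hk) v
  rw [hv0, Nat.sub_zero] at hhead
  rw [← hvt, hvk] at htail
  refine ⟨t₁ + (k + 1 - t₂), by omega, ?_⟩
  calc mPow A (k + 1) i j ≤ ∏ t ∈ Finset.range (k + 1), f t := hv
    _ = (∏ t ∈ Finset.Ico 0 t₁, f t) * (∏ t ∈ Finset.Ico t₁ t₂, f t) *
          ∏ t ∈ Finset.Ico t₂ (k + 1), f t := by
      rw [Finset.prod_Ico_consecutive _ (Nat.zero_le t₁) ht.le,
        Finset.prod_Ico_consecutive _ (Nat.zero_le t₂) (ht₂.trans hk), Finset.range_eq_Ico]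
    _ ≤ mPow A t₁ i (v t₁) * 1 * mPow A (k + 1 - t₂) (v t₁) j := by gcongr
    _ ≤ mPow A (t₁ + (k + 1 - t₂)) i j := by
      rw [mul_one]; exact mPow_mul_mPow_le_mPow_add A _ _ i _ j

theorem mPow_le_mStar (hmu : mu A ≤ 1) (k : ℕ) (i j : m) : mPow A k i j ≤ mStar A i j := by
  induction k using Nat.strong_induction_on with
  | _ k ih =>
    by_cases hk : k < Fintype.card m
    · exact Finset.le_sup (f := fun ℓ => mPow A ℓ i j) (Finset.mem_range.2 hk)
    · obtain ⟨k', hk', hle⟩ := exists_lt_mPow_le_of_card_le A hmu (not_lt.1 hk) i j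
      exact hle.trans (ih k' hk')

theorem mul_mStar_le_mStar (hmu : mu A ≤ 1) (i j l : m) :
    A i j * mStar A j l ≤ mStar A i l := by
  simp only [mStar, NNReal.mul_finset_sup, Finset.sup_le_iff]
  intro ℓ _
  exact (mul_mPow_le_mPow_succ A ℓ i j l).trans (mPow_le_mStar A hmu _ i l)

theorem mStar_pos (hA : MaxIrreducible A) (hmu : mu A ≤ 1) (i j : m) : 0 < mStar A i j := by
  obtain ⟨k, -, hk⟩ := hA i j
  exact hk.trans_le (mPow_le_mStar A hmu k i j)

omit [DecidableEq m] in
theorem mul_le_mVec (B : Matrix m m NNReal) (x : m → NNReal) (i k : m) :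
    B i k * x k ≤ mVec B x i :=
  Finset.le_sup (f := fun k => B i k * x k) (Finset.mem_univ k)

omit [DecidableEq m] in
theorem mul_mVec_le_mVec {B : Matrix m m NNReal} {c : NNReal} {i j : m}
    (h : ∀ l, c * B j l ≤ B i l) (x : m → NNReal) : c * mVec B x j ≤ mVec B x i := by
  rw [mVec, NNReal.mul_finset_sup, Finset.sup_le_iff]
  intro l _
  rw [← mul_assoc]
  exact (mul_le_mul_left (h l) _).trans (mul_le_mVec B x i l)

end MaxTimes

theorem stmt_8 (n : ℕ) (A : Matrix (Fin n) (Fin n) NNReal) (hA : MaxIrreducible A)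
    (hmu : mu A ≤ 1) (x : Fin n → NNReal) (hx : x ≠ 0)
    (Astar : Matrix (Fin n) (Fin n) NNReal)
    (hAstar : Astar = fun i j => (Finset.range n).sup fun ℓ => mPow A ℓ i j)
    (z : Fin n → NNReal) (hz : z = mVec Astar x) :
    (∀ i, 0 < z i) ∧ ∀ i j, (z i)⁻¹ * A i j * z j ≤ 1 := by
  have hstar : Astar = mStar A := by
    funext i j
    simp [hAstar, mStar]
  subst hz hstar
  obtain ⟨j₀, hj₀⟩ := Function.ne_iff.1 hx
  have hpos : ∀ i, 0 < mVec (mStar A) x i := fun i =>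
    (mul_pos (mStar_pos A hA hmu i j₀) (pos_iff_ne_zero.2 hj₀)).trans_le (mul_le_mVec _ x i j₀)
  refine ⟨hpos, fun i j => ?_⟩
  rw [mul_assoc, inv_mul_le_one₀ (hpos i)]
  exact mul_mVec_le_mVec (mul_mStar_le_mStar A hmu i j) x
end

section
/- Let A and B be n×n nonnegative matrices with A ⊗ B = B ⊗ A. Then μ(A ⊕ B) ≤ max(μ(A), μ(B)). Moreover, if A and B are irreducible, then μ(A ⊕ B) = max(μ(A), μ(B)). -/
open Filter Topology

/-!
The diagonal of `(A ⊕ B)^ℓ` is dominated by diagonals of the mixed products `A^p ⊗ B^q` with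
`p + q = ℓ`, because `A` and `B` commute. Since `(A^p ⊗ B^q)^t = A^(pt) ⊗ B^(qt)`, it suffices to know
that `A^s` grows like `μ(A)^s`: an optimal path of length `s > n` revisits a node, and the circuit cut
out there weighs at most `μ(A)^ℓ`, so `(A^(t+s))_ij ≤ M^s μ(A)^t` for `s ≥ n` and `M` bounding the
entries. Taking `t`-th roots gives `(A^p ⊗ B^q)_ii ≤ μ(A)^p μ(B)^q ≤ max(μ(A), μ(B))^ℓ`. The reverse
inequality is monotonicity of `μ`.
-/

lemma NNReal.le_of_forall_pow_le_mul_pow {x y K : NNReal} (N : ℕ)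
    (h : ∀ t, x ^ (t + N) ≤ K * y ^ t) : x ≤ y := by
  by_contra! hyx
  have hx : 0 < x := zero_le.trans_lt hyx
  have hbound : ∀ t, x ^ N ≤ K * (y / x) ^ t := fun t => by
    rw [div_pow, ← mul_div_assoc, le_div_iff₀ (pow_pos hx t), ← pow_add, add_comm]
    exact h t
  have hlim : Tendsto (fun t => K * (y / x) ^ t) atTop (𝓝 0) := by
    simpa using (NNReal.tendsto_pow_atTop_nhds_zero_of_lt_one
      (NNReal.div_lt_one_of_lt hyx)).const_mul K
  exact (pow_pos hx N).ne' (le_antisymm (ge_of_tendsto' hlim hbound) zero_le)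

namespace MaxTimes

variable {m : Type*} [Fintype m]

lemma mProd_apply (A B : Matrix m m NNReal) (i j : m) :
    mProd A B i j = Finset.univ.sup fun k => A i k * B k j := rfl

lemma mul_le_mProd_apply (A B : Matrix m m NNReal) (i k j : m) :
    A i k * B k j ≤ mProd A B i j :=
  Finset.le_sup (f := fun k => A i k * B k j) (Finset.mem_univ k)

lemma mProd_apply_le_iff {A B : Matrix m m NNReal} {i j : m} {r : NNReal} :
    mProd A B i j ≤ r ↔ ∀ k, A i k * B k j ≤ r := by
  simp [mProd_apply]

lemma mProd_assoc (A B C : Matrix m m NNReal) :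
    mProd (mProd A B) C = mProd A (mProd B C) := by
  funext i j
  simp only [mProd_apply, NNReal.finset_sup_mul, NNReal.mul_finset_sup, mul_assoc]
  exact Finset.sup_comm _ _ _

lemma mProd_mono {A A' B B' : Matrix m m NNReal} (hA : ∀ i j, A i j ≤ A' i j)
    (hB : ∀ i j, B i j ≤ B' i j) (i j : m) : mProd A B i j ≤ mProd A' B' i j :=
  Finset.sup_mono_fun fun k _ => mul_le_mul' (hA i k) (hB k j)

variable [DecidableEq m]

lemma mProd_one (A : Matrix m m NNReal) : mProd A 1 = A := by
  funext i j
  refine le_antisymm (mProd_apply_le_iff.2 fun k => ?_) ?_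
  · rcases eq_or_ne k j with rfl | h <;> simp [*]
  · simpa using mul_le_mProd_apply A 1 i j j

lemma one_mProd (A : Matrix m m NNReal) : mProd 1 A = A := by
  funext i j
  refine le_antisymm (mProd_apply_le_iff.2 fun k => ?_) ?_
  · rcases eq_or_ne i k with rfl | h <;> simp [*]
  · simpa using mul_le_mProd_apply 1 A i i j

lemma mPow_zero (A : Matrix m m NNReal) : mPow A 0 = 1 := rfl

lemma mPow_succ (A : Matrix m m NNReal) (t : ℕ) : mPow A (t + 1) = mProd A (mPow A t) := rfl

lemma mPow_add (A : Matrix m m NNReal) (p q : ℕ) :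
    mPow A (p + q) = mProd (mPow A p) (mPow A q) := by
  induction p with
  | zero => rw [zero_add, mPow_zero, one_mProd]
  | succ p ih => rw [Nat.add_right_comm, mPow_succ, ih, mPow_succ, mProd_assoc]

lemma mPow_mul (A : Matrix m m NNReal) (p t : ℕ) : mPow A (p * t) = mPow (mPow A p) t := by
  induction t with
  | zero => rfl
  | succ t ih => rw [Nat.mul_succ, add_comm, mPow_add, ih, mPow_succ]

lemma mPow_mono {A A' : Matrix m m NNReal} (h : ∀ i j, A i j ≤ A' i j) (t : ℕ) (i j : m) :
    mPow A t i j ≤ mPow A' t i j := by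
  induction t generalizing i j with
  | zero => exact le_rfl
  | succ t ih => exact mProd_mono h ih i j

lemma mPow_apply_le_pow {A : Matrix m m NNReal} {M : NNReal} (hM : ∀ i j, A i j ≤ M) (t : ℕ)
    (i j : m) : mPow A t i j ≤ M ^ t := by
  induction t generalizing i j with
  | zero => by_cases h : i = j <;> simp [mPow_zero, h]
  | succ t ih => exact mProd_apply_le_iff.2 fun k => pow_succ' M t ▸ mul_le_mul' (hM i k) (ih k j)

lemma mProd_mPow_comm {A B : Matrix m m NNReal} (h : mProd A B = mProd B A) (t : ℕ) :
    mProd A (mPow B t) = mProd (mPow B t) A := by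
  induction t with
  | zero => rw [mPow_zero, mProd_one, one_mProd]
  | succ t ih => rw [mPow_succ, ← mProd_assoc, h, mProd_assoc, ih, mProd_assoc]

lemma mPow_mProd_of_comm {A B : Matrix m m NNReal} (h : mProd A B = mProd B A) (t : ℕ) :
    mPow (mProd A B) t = mProd (mPow A t) (mPow B t) := by
  induction t with
  | zero => rw [mPow_zero, mPow_zero, mPow_zero, one_mProd]
  | succ t ih =>
    rw [mPow_succ, ih, mPow_succ, mPow_succ, mProd_assoc, ← mProd_assoc B,
      mProd_mPow_comm h.symm, mProd_assoc, mProd_assoc]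

lemma mu_le_iff {C : Matrix m m NNReal} {r : NNReal} :
    mu C ≤ r ↔ ∀ ℓ, 1 ≤ ℓ → ℓ ≤ Fintype.card m → ∀ i, mPow C ℓ i i ≤ r ^ ℓ := by
  simp only [mu, Finset.sup_le_iff, Finset.mem_Icc, Finset.mem_univ, true_implies, and_imp]
  refine forall_congr' fun ℓ => imp_congr_right fun hℓ => imp_congr_right fun _ =>
    forall_congr' fun i => ?_
  rw [NNReal.rpow_inv_le_iff (by exact_mod_cast hℓ), NNReal.rpow_natCast]

lemma mPow_apply_self_le_mu_pow (C : Matrix m m NNReal) {ℓ : ℕ} (h1 : 1 ≤ ℓ)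
    (h2 : ℓ ≤ Fintype.card m) (i : m) : mPow C ℓ i i ≤ mu C ^ ℓ :=
  mu_le_iff.1 le_rfl ℓ h1 h2 i

lemma mu_mono {A A' : Matrix m m NNReal} (h : ∀ i j, A i j ≤ A' i j) : mu A ≤ mu A' :=
  mu_le_iff.2 fun ℓ h1 h2 i => (mPow_mono h ℓ i i).trans (mPow_apply_self_le_mu_pow A' h1 h2 i)

lemma mu_le_of_forall_le {C : Matrix m m NNReal} {M : NNReal} (hM : ∀ i j, C i j ≤ M) :
    mu C ≤ M :=
  mu_le_iff.2 fun ℓ _ _ i => mPow_apply_le_pow hM ℓ i i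

section Paths

variable (C : Matrix m m NNReal)

lemma prod_le_mPow (p : ℕ → m) (t : ℕ) :
    ∏ s ∈ Finset.range t, C (p s) (p (s + 1)) ≤ mPow C t (p 0) (p t) := by
  induction t generalizing p with
  | zero => simp [mPow_zero]
  | succ t ih =>
    rw [Finset.prod_range_succ', mul_comm]
    exact (mul_le_mul_right (ih fun s => p (s + 1)) _).trans (mul_le_mProd_apply _ _ _ _ _)

lemma prod_Ico_le_mPow (p : ℕ → m) {a b : ℕ} (hab : a ≤ b) :
    ∏ s ∈ Finset.Ico a b, C (p s) (p (s + 1)) ≤ mPow C (b - a) (p a) (p b) := by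
  rw [Finset.prod_Ico_eq_prod_range]
  simpa [Nat.add_sub_cancel' hab, add_assoc] using prod_le_mPow C (fun s => p (a + s)) (b - a)

lemma exists_path_mPow_le_prod {t : ℕ} {i j : m} (h : 0 < mPow C t i j) :
    ∃ p : ℕ → m, p 0 = i ∧ p t = j ∧
      mPow C t i j ≤ ∏ s ∈ Finset.range t, C (p s) (p (s + 1)) := by
  induction t generalizing i with
  | zero =>
    obtain rfl : i = j := by
      by_contra hij
      simp [mPow_zero, hij] at h
    exact ⟨fun _ => i, rfl, rfl, by simp [mPow_zero]⟩
  | succ t ih =>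
    obtain ⟨k, -, hk⟩ := Finset.exists_mem_eq_sup Finset.univ ⟨i, Finset.mem_univ i⟩
      fun k => C i k * mPow C t k j
    rw [mPow_succ, mProd_apply, hk] at h ⊢
    obtain ⟨q, rfl, rfl, hq⟩ := ih (pos_iff_ne_zero.2 (right_ne_zero_of_mul h.ne'))
    refine ⟨fun | 0 => i | s + 1 => q s, rfl, rfl, ?_⟩
    rw [Finset.prod_range_succ', mul_comm (C i _)]
    exact mul_le_mul_left hq _

lemma exists_mPow_le_mu_pow_mul_mPow_sub {t : ℕ} (ht : Fintype.card m < t) (i j : m) :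
    ∃ ℓ, 1 ≤ ℓ ∧ ℓ ≤ Fintype.card m ∧ mPow C t i j ≤ mu C ^ ℓ * mPow C (t - ℓ) i j := by
  have hcard : 1 ≤ Fintype.card m := Fintype.card_pos_iff.2 ⟨i⟩
  rcases eq_zero_or_pos (mPow C t i j) with h0 | hpos
  · exact ⟨1, le_rfl, hcard, h0 ▸ zero_le⟩
  obtain ⟨p, rfl, rfl, hp⟩ := exists_path_mPow_le_prod C hpos
  obtain ⟨a, b, hab, hbn, hpab⟩ :
      ∃ a b, a < b ∧ b ≤ Fintype.card m ∧ p a = p b := by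
    obtain ⟨a, ha, b, hb, hne, hpab⟩ := Finset.exists_ne_map_eq_of_card_lt_of_maps_to
      (s := Finset.range (Fintype.card m + 1)) (by simp) fun s _ => Finset.mem_univ (p s)
    rw [Finset.mem_range] at ha hb
    rcases hne.lt_or_gt with h | h
    · exact ⟨a, b, h, by omega, hpab⟩
    · exact ⟨b, a, h, by omega, hpab.symm⟩
  refine ⟨b - a, by omega, by omega, ?_⟩
  let w : ℕ → NNReal := fun s => C (p s) (p (s + 1))
  have hsplit : ∏ s ∈ Finset.range t, w s =
      (∏ s ∈ Finset.Ico 0 a, w s) * (∏ s ∈ Finset.Ico a b, w s) * ∏ s ∈ Finset.Ico b t, w s := by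
    rw [Finset.prod_Ico_consecutive _ (Nat.zero_le a) hab.le,
      Finset.prod_Ico_consecutive _ (Nat.zero_le b) (by omega), Finset.range_eq_Ico]
  calc mPow C t (p 0) (p t)
      ≤ mPow C (a - 0) (p 0) (p a) * mPow C (b - a) (p a) (p b) * mPow C (t - b) (p b) (p t) := by
        refine hp.trans (hsplit.le.trans ?_)
        gcongr
        exacts [prod_Ico_le_mPow C p (Nat.zero_le a), prod_Ico_le_mPow C p hab.le,
          prod_Ico_le_mPow C p (by omega)]
    _ ≤ mPow C a (p 0) (p a) * mu C ^ (b - a) * mPow C (t - b) (p a) (p t) := by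
        rw [Nat.sub_zero, ← hpab]
        gcongr
        exact mPow_apply_self_le_mu_pow C (by omega) (by omega) _
    _ = mu C ^ (b - a) * (mPow C a (p 0) (p a) * mPow C (t - b) (p a) (p t)) := by ring
    _ ≤ mu C ^ (b - a) * mPow C (t - (b - a)) (p 0) (p t) := by
        rw [show t - (b - a) = a + (t - b) by omega, mPow_add]
        gcongr
        exact mul_le_mProd_apply _ _ _ _ _

end Paths

lemma exists_le_card_mPow_le_mu_pow_mul_mPow (C : Matrix m m NNReal) (t : ℕ) (i j : m) :
    ∃ r ≤ Fintype.card m, r ≤ t ∧ mPow C t i j ≤ mu C ^ (t - r) * mPow C r i j := by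
  induction t using Nat.strong_induction_on with
  | _ t ih =>
    by_cases ht : t ≤ Fintype.card m
    · exact ⟨t, ht, le_rfl, by simp⟩
    obtain ⟨ℓ, hℓ1, hℓn, hcut⟩ := exists_mPow_le_mu_pow_mul_mPow_sub C (not_le.1 ht) i j
    obtain ⟨r, hrn, hrt, hr⟩ := ih (t - ℓ) (by omega)
    refine ⟨r, hrn, by omega, ?_⟩
    calc mPow C t i j ≤ mu C ^ ℓ * mPow C (t - ℓ) i j := hcut
      _ ≤ mu C ^ ℓ * (mu C ^ (t - ℓ - r) * mPow C r i j) := by gcongr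
      _ = mu C ^ (t - r) * mPow C r i j := by
        rw [← mul_assoc, ← pow_add, show ℓ + (t - ℓ - r) = t - r by omega]

lemma mPow_add_apply_le {C : Matrix m m NNReal} {M : NNReal} (hM : ∀ i j, C i j ≤ M) {s : ℕ}
    (hs : Fintype.card m ≤ s) (t : ℕ) (i j : m) :
    mPow C (t + s) i j ≤ M ^ s * mu C ^ t := by
  obtain ⟨r, hrn, -, hr⟩ := exists_le_card_mPow_le_mu_pow_mul_mPow C (t + s) i j
  calc mPow C (t + s) i j ≤ mu C ^ (t + s - r) * mPow C r i j := hr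
    _ ≤ mu C ^ t * M ^ (s - r) * M ^ r := by
        rw [show t + s - r = t + (s - r) by omega, pow_add]
        gcongr
        exacts [mu_le_of_forall_le hM, mPow_apply_le_pow hM r i j]
    _ = M ^ s * mu C ^ t := by
        rw [mul_assoc, ← pow_add, Nat.sub_add_cancel (by omega), mul_comm]

lemma mPow_mul_add_apply_le {C : Matrix m m NNReal} {M : NNReal} (hM : ∀ i j, C i j ≤ M)
    (p t : ℕ) (i j : m) :
    mPow C (p * (t + Fintype.card m)) i j ≤ M ^ (p * Fintype.card m) * mu C ^ (p * t) := by
  rcases p.eq_zero_or_pos with rfl | hp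
  · simpa using mPow_apply_le_pow hM 0 i j
  · rw [mul_add]
    exact mPow_add_apply_le hM (Nat.le_mul_of_pos_left _ hp) _ i j

lemma pow_apply_self_le_mPow (C : Matrix m m NNReal) (t : ℕ) (i : m) :
    C i i ^ t ≤ mPow C t i i := by
  induction t with
  | zero => simp [mPow_zero]
  | succ t ih =>
    rw [pow_succ']
    exact (mul_le_mul_right ih _).trans (mul_le_mProd_apply _ _ _ _ _)

lemma mProd_mPow_apply_self_le {A B : Matrix m m NNReal} (h : mProd A B = mProd B A)
    (p q : ℕ) (i : m) : mProd (mPow A p) (mPow B q) i i ≤ mu A ^ p * mu B ^ q := by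
  obtain ⟨MA, hMA⟩ := Finite.exists_le fun ij : m × m => A ij.1 ij.2
  obtain ⟨MB, hMB⟩ := Finite.exists_le fun ij : m × m => B ij.1 ij.2
  have hcomm : mProd (mPow A p) (mPow B q) = mProd (mPow B q) (mPow A p) :=
    mProd_mPow_comm (mProd_mPow_comm h.symm p).symm q
  set n := Fintype.card m
  refine NNReal.le_of_forall_pow_le_mul_pow n (K := MA ^ (p * n) * MB ^ (q * n)) fun t => ?_
  calc mProd (mPow A p) (mPow B q) i i ^ (t + n)
      ≤ mPow (mProd (mPow A p) (mPow B q)) (t + n) i i := pow_apply_self_le_mPow _ _ i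
    _ = mProd (mPow A (p * (t + n))) (mPow B (q * (t + n))) i i := by
        rw [mPow_mProd_of_comm hcomm, mPow_mul, mPow_mul]
    _ ≤ MA ^ (p * n) * mu A ^ (p * t) * (MB ^ (q * n) * mu B ^ (q * t)) :=
        mProd_apply_le_iff.2 fun k => mul_le_mul'
          (mPow_mul_add_apply_le (fun i j => hMA (i, j)) p t i k)
          (mPow_mul_add_apply_le (fun i j => hMB (i, j)) q t k i)
    _ = MA ^ (p * n) * MB ^ (q * n) * (mu A ^ p * mu B ^ q) ^ t := by
        rw [mul_pow, ← pow_mul, ← pow_mul]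
        ring

lemma exists_mPow_max_apply_le {A B : Matrix m m NNReal} (h : mProd A B = mProd B A) (ℓ : ℕ)
    (i j : m) : ∃ p q, p + q = ℓ ∧
      mPow (fun i j => max (A i j) (B i j)) ℓ i j ≤ mProd (mPow A p) (mPow B q) i j := by
  induction ℓ generalizing i with
  | zero => exact ⟨0, 0, rfl, (congrFun (congrFun (one_mProd (mPow B 0)) i) j).ge⟩
  | succ ℓ ih =>
    set C : Matrix m m NNReal := fun i j => max (A i j) (B i j)
    obtain ⟨k, -, hk⟩ := Finset.exists_mem_eq_sup Finset.univ ⟨i, Finset.mem_univ i⟩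
      fun k => C i k * mPow C ℓ k j
    have hstep : mPow C (ℓ + 1) i j = max (A i k) (B i k) * mPow C ℓ k j := hk
    obtain ⟨p, q, rfl, hpq⟩ := ih k
    rw [hstep]
    rcases max_choice (A i k) (B i k) with hA | hB
    · refine ⟨p + 1, q, by ring, ?_⟩
      rw [hA, mPow_succ, mProd_assoc]
      exact (mul_le_mul_right hpq _).trans (mul_le_mProd_apply _ _ _ _ _)
    · refine ⟨p, q + 1, by ring, ?_⟩
      rw [hB, mPow_succ B, ← mProd_assoc, ← mProd_mPow_comm h.symm p, mProd_assoc]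
      exact (mul_le_mul_right hpq _).trans (mul_le_mProd_apply _ _ _ _ _)

lemma mu_max_le {A B : Matrix m m NNReal} (h : mProd A B = mProd B A) :
    mu (fun i j => max (A i j) (B i j)) ≤ max (mu A) (mu B) := by
  refine mu_le_iff.2 fun ℓ _ _ i => ?_
  obtain ⟨p, q, rfl, hpq⟩ := exists_mPow_max_apply_le h ℓ i i
  calc _ ≤ mu A ^ p * mu B ^ q := hpq.trans (mProd_mPow_apply_self_le h p q i)
    _ ≤ max (mu A) (mu B) ^ p * max (mu A) (mu B) ^ q := by gcongr <;> simp
    _ = max (mu A) (mu B) ^ (p + q) := (pow_add _ _ _).symm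

lemma max_mu_le_mu_max (A B : Matrix m m NNReal) :
    max (mu A) (mu B) ≤ mu (fun i j => max (A i j) (B i j)) :=
  max_le (mu_mono fun _ _ => le_max_left _ _) (mu_mono fun _ _ => le_max_right _ _)

end MaxTimes

theorem stmt_13 (n : ℕ) (A B : Matrix (Fin n) (Fin n) NNReal)
    (hcomm : mProd A B = mProd B A) :
    mu (fun i j => max (A i j) (B i j)) ≤ max (mu A) (mu B) ∧
      (MaxIrreducible A → MaxIrreducible B →
        mu (fun i j => max (A i j) (B i j)) = max (mu A) (mu B)) :=
  ⟨MaxTimes.mu_max_le hcomm,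
    fun _ _ => le_antisymm (MaxTimes.mu_max_le hcomm) (MaxTimes.max_mu_le_mu_max A B)⟩
end
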